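/- arXiv:2506.11696 — 7 statements merged into one kernel-verified Lean document; each statement's English description precedes it below -/
import Mathlib

section
/- In every 2-coloring of the edges of the cocktail party graph G^c on n vertices (n even), there exist subsets A, B of the vertex set and colors i, j ∈ {1,2} such that A ∪ B = V, A is a 2-reachable subset of G^c_i, and B is a 2-reachable subset of G^c_j. -/
/-! Common setting: `V` is the vertex set, `m : V → V` is a fixed-point-free
involution pairing each vertex `v` with its unique non-neighbor `m v` (the
deleted perfect matching), and `c : V → V → Fin 2` is a symmetric edge
coloring.  Color `0` stands for color 1 (red), color `1` for color 2 (blue). -/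

/-- Adjacency in the cocktail party graph: distinct and not matched. -/
def cpAdj {V : Type*} (m : V → V) (u v : V) : Prop := u ≠ v ∧ m u ≠ v

/-- Adjacency in the color-`i` subgraph. -/
def adjC {V : Type*} (m : V → V) (c : V → V → Fin 2) (i : Fin 2) (u v : V) : Prop :=
  cpAdj m u v ∧ c u v = i

/-- `u` and `v` are at distance at most 2 in the color-`i` subgraph. -/
def reach2 {V : Type*} (m : V → V) (c : V → V → Fin 2) (i : Fin 2) (u v : V) : Prop :=
  u = v ∨ adjC m c i u v ∨ ∃ w, adjC m c i u w ∧ adjC m c i w v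

/-- `X` is a 2-reachable subset of the color-`i` subgraph. -/
def reachSet {V : Type*} (m : V → V) (c : V → V → Fin 2) (i : Fin 2) (X : Set V) : Prop :=
  ∀ x ∈ X, ∀ y ∈ X, reach2 m c i x y

/-- The monochromatic star of color `i` centered at `v` (as a vertex set). -/
def mStar {V : Type*} (m : V → V) (c : V → V → Fin 2) (i : Fin 2) (v : V) : Set V :=
  {v} ∪ {u | adjC m c i v u}

/-- The pair `(u, v)` is critical for color `i`: distance `> 2` in color `i`. -/
def critPair {V : Type*} (m : V → V) (c : V → V → Fin 2) (i : Fin 2) (u v : V) : Prop :=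
  ¬ reach2 m c i u v

section Aux
variable {V : Type*}

lemma fin2_other : ∀ (a i j : Fin 2), j ≠ i → a ≠ i → a = j := by decide

lemma cpAdj_symm {m : V → V} (hm : Function.Involutive m) {u v : V}
    (h : cpAdj m u v) : cpAdj m v u := by
  refine ⟨h.1.symm, fun hv => h.2 ?_⟩
  rw [← hv, hm]

lemma adjC_symm {m : V → V} (hm : Function.Involutive m) {c : V → V → Fin 2}
    (hc : ∀ u v, c u v = c v u) {i : Fin 2} {u v : V}
    (h : adjC m c i u v) : adjC m c i v u :=
  ⟨cpAdj_symm hm h.1, (hc v u).trans h.2⟩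

lemma reach2_symm {m : V → V} (hm : Function.Involutive m) {c : V → V → Fin 2}
    (hc : ∀ u v, c u v = c v u) {i : Fin 2} {u v : V}
    (h : reach2 m c i u v) : reach2 m c i v u := by
  rcases h with h | h | ⟨w, h1, h2⟩
  · exact Or.inl h.symm
  · exact Or.inr (Or.inl (adjC_symm hm hc h))
  · exact Or.inr (Or.inr ⟨w, adjC_symm hm hc h2, adjC_symm hm hc h1⟩)

lemma reachSet_mStar {m : V → V} (hm : Function.Involutive m) {c : V → V → Fin 2}
    (hc : ∀ u v, c u v = c v u) (i : Fin 2) (v : V) :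
    reachSet m c i (mStar m c i v) := by
  rintro x hx y hy
  rcases hx with hx | hx <;> rcases hy with hy | hy
  · exact Or.inl (hx.trans hy.symm)
  · rw [Set.mem_singleton_iff] at hx
    subst hx; exact Or.inr (Or.inl hy)
  · rw [Set.mem_singleton_iff] at hy
    subst hy; exact Or.inr (Or.inl (adjC_symm hm hc hx))
  · by_cases hxy : x = y
    · exact Or.inl hxy
    · exact Or.inr (Or.inr ⟨v, adjC_symm hm hc hx, hy⟩)

/-- Key lemma: in the case where no matched pair is critical, a vertex cannot
have a `0`-critical partner `z` and a `1`-critical partner `y` unless `y = m z`. -/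
lemma Lstar {m : V → V} (hm : Function.Involutive m) {c : V → V → Fin 2}
    (hc : ∀ u v, c u v = c v u)
    (hnc : ∀ (v : V) (i : Fin 2), reach2 m c i v (m v))
    {v z y : V} (hz : critPair m c 0 v z) (hy : critPair m c 1 v y) : y = m z := by
  rw [critPair, reach2] at hz hy
  push_neg at hz hy
  obtain ⟨hvz, haz, hz2⟩ := hz
  obtain ⟨hvy, hay, hy2⟩ := hy
  have hzmv : z ≠ m v := by
    rintro rfl; exact (fun h => h.elim hvz (fun h => h.elim haz (fun ⟨w, h1, h2⟩ => hz2 w h1 h2)))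
      (hnc v 0)
  have hymv : y ≠ m v := by
    rintro rfl; exact (fun h => h.elim hvy (fun h => h.elim hay (fun ⟨w, h1, h2⟩ => hy2 w h1 h2)))
      (hnc v 1)
  have hcvz : c v z = 1 := by
    refine fin2_other _ 0 1 (by decide) (fun h => haz ⟨⟨hvz, fun hh => hzmv hh.symm⟩, h⟩)
  have hcvy : c v y = 0 := by
    refine fin2_other _ 1 0 (by decide) (fun h => hay ⟨⟨hvy, fun hh => hymv hh.symm⟩, h⟩)
  have hyz : y ≠ z := fun h => by rw [h, hcvz] at hcvy; exact absurd hcvy (by decide)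
  by_contra hne
  -- edge y z must be color 1 (from 0-criticality of (v,z) through y)
  have h1 : ¬ adjC m c 0 y z := by
    intro hadj
    exact hz2 y ⟨⟨hvy, fun hh => hymv hh.symm⟩, hcvy⟩ hadj
  have hmyz : m y ≠ z := fun h => hne (by rw [← h, hm])
  have hcyz : c y z = 1 :=
    fin2_other _ 0 1 (by decide) (fun h => h1 ⟨⟨hyz, hmyz⟩, h⟩)
  -- edge z y must be not color 1 (from 1-criticality of (v,y) through z)
  have h2 : ¬ adjC m c 1 z y := by
    intro hadj
    exact hy2 z ⟨⟨hvz, fun hh => hzmv hh.symm⟩, hcvz⟩ hadj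
  have hmzy : m z ≠ y := fun h => hne h.symm
  exact h2 ⟨⟨fun h => hyz h.symm, hmzy⟩, (hc z y).trans hcyz⟩

end Aux

/-- Main theorem: every 2-colored cocktail party graph is covered by two
monochromatic 2-reachable subsets. -/
theorem stmt1 {V : Type*} [Fintype V] (m : V → V)
    (hm : Function.Involutive m) (hmf : ∀ v, m v ≠ v)
    (c : V → V → Fin 2) (hc : ∀ u v, c u v = c v u) :
    ∃ (A B : Set V) (i j : Fin 2), A ∪ B = Set.univ ∧
      reachSet m c i A ∧ reachSet m c j B := by
  classical
  by_cases hcase : ∃ (v : V) (i : Fin 2), ¬ reach2 m c i v (m v)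
  · -- Case 1: some matched pair is critical; use two opposite-color stars
    obtain ⟨v, i, hv⟩ := hcase
    obtain ⟨i', hi'⟩ : ∃ i' : Fin 2, i' ≠ i := by
      fin_cases i
      · exact ⟨1, by decide⟩
      · exact ⟨0, by decide⟩
    refine ⟨mStar m c i' v, mStar m c i' (m v), i', i', ?_, reachSet_mStar hm hc i' v,
      reachSet_mStar hm hc i' (m v)⟩
    rw [Set.eq_univ_iff_forall]
    intro u
    rw [reach2] at hv; push_neg at hv
    obtain ⟨-, -, hv2⟩ := hv
    by_cases huv : u = v
    · exact Or.inl (Or.inl huv)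
    by_cases humv : u = m v
    · exact Or.inr (Or.inl humv)
    by_cases hcu : c v u = i
    · -- then c (m v) u must be i'
      have had : adjC m c i v u := ⟨⟨fun h => huv h.symm, fun h => humv h.symm⟩, hcu⟩
      have hnad := hv2 u had
      have hcu2 : c u (m v) = i' := by
        exact fin2_other _ i i' hi' (fun h => hnad ⟨⟨humv, fun hh => huv (hm.injective hh)⟩, h⟩)
      refine Or.inr (Or.inr ⟨⟨fun h => humv h.symm, ?_⟩, (hc (m v) u).trans hcu2⟩)
      rw [hm]; exact fun h => huv h.symm
    · exact Or.inl (Or.inr ⟨⟨fun h => huv h.symm, fun h => humv h.symm⟩,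
        fin2_other _ i i' hi' hcu⟩)
  · -- Case 2: no matched pair is critical
    push_neg at hcase
    have hnc : ∀ (v : V) (i : Fin 2), reach2 m c i v (m v) := fun v i => hcase v i
    -- selection of a 0-critical partner
    let x : V → V := fun v => if h : ∃ z, critPair m c 0 v z then h.choose else v
    have hxspec : ∀ v, (∃ z, critPair m c 0 v z) → critPair m c 0 v (x v) := by
      intro v h
      simp only [x, dif_pos h]
      exact h.choose_spec
    -- rank function
    let e := Fintype.equivFin V
    let pr : V → ℕ := fun v => min (e v : ℕ) (e (m v) : ℕ)
    have hprm : ∀ v, pr (m v) = pr v := by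
      intro v; simp only [pr, hm v]; exact min_comm _ _
    have hprinj : ∀ u w : V, pr u = pr w → u = w ∨ u = m w ∨ m u = w ∨ m u = m w := by
      intro u w h
      simp only [pr] at h
      rcases min_choice (e u : ℕ) (e (m u) : ℕ) with h1 | h1 <;>
        rcases min_choice (e w : ℕ) (e (m w) : ℕ) with h2 | h2 <;>
        rw [h1, h2] at h <;>
        [exact Or.inl (e.injective (Fin.val_injective h));
         exact Or.inr (Or.inl (e.injective (Fin.val_injective h)));
         exact Or.inr (Or.inr (Or.inl (e.injective (Fin.val_injective h))));
         exact Or.inr (Or.inr (Or.inr (e.injective (Fin.val_injective h))))]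
    let P : V → Prop := fun v => pr v < pr (x v)
    refine ⟨{v | ¬ (∃ z, critPair m c 0 v z) ∨ ((∃ z, critPair m c 1 v z) ∧ P v)},
      {v | ¬ (∃ z, critPair m c 0 v z) ∨ ((∃ z, critPair m c 1 v z) ∧ P v)}ᶜ,
      0, 1, Set.union_compl_self _, ?_, ?_⟩
    · -- A is 0-reachable
      intro u hu w hw
      by_contra hcr
      have hcrs : critPair m c 0 w u := fun h => hcr (reach2_symm hm hc h)
      have hu0 : ∃ z, critPair m c 0 u z := ⟨w, hcr⟩
      have hw0 : ∃ z, critPair m c 0 w z := ⟨u, hcrs⟩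
      rw [Set.mem_setOf_eq] at hu hw
      obtain ⟨hu1, hPu⟩ := hu.resolve_left (not_not_intro hu0)
      obtain ⟨hw1, hPw⟩ := hw.resolve_left (not_not_intro hw0)
      -- x u = w
      obtain ⟨y, hy⟩ := hu1
      have e1 : y = m (x u) := Lstar hm hc hnc (hxspec u hu0) hy
      have e2 : y = m w := Lstar hm hc hnc hcr hy
      have hxu : x u = w := hm.injective (e1.symm.trans e2)
      obtain ⟨y', hy'⟩ := hw1
      have e3 : y' = m (x w) := Lstar hm hc hnc (hxspec w hw0) hy'
      have e4 : y' = m u := Lstar hm hc hnc hcrs hy'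
      have hxw : x w = u := hm.injective (e3.symm.trans e4)
      have hPu' : pr u < pr (x u) := hPu
      have hPw' : pr w < pr (x w) := hPw
      rw [hxu] at hPu'
      rw [hxw] at hPw'
      exact lt_asymm hPu' hPw'
    · -- B is 1-reachable
      intro u hu w hw
      by_contra hcr
      have hcrs : critPair m c 1 w u := fun h => hcr (reach2_symm hm hc h)
      rw [Set.mem_compl_iff, Set.mem_setOf_eq] at hu hw
      push_neg at hu hw
      obtain ⟨hu0, hu2⟩ := hu
      obtain ⟨hw0, hw2⟩ := hw
      have hnPu : ¬ P u := hu2 ⟨w, hcr⟩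
      have hnPw : ¬ P w := hw2 ⟨u, hcrs⟩
      -- x u = m w, x w = m u
      have e1 : w = m (x u) := Lstar hm hc hnc (hxspec u hu0) hcr
      have e2 : u = m (x w) := Lstar hm hc hnc (hxspec w hw0) hcrs
      have hxu : x u = m w := by rw [e1, hm]
      have hxw : x w = m u := by rw [e2, hm]
      have hnPu' : ¬ (pr u < pr (x u)) := hnPu
      have hnPw' : ¬ (pr w < pr (x w)) := hnPw
      rw [hxu, hprm, not_lt] at hnPu'
      rw [hxw, hprm, not_lt] at hnPw'
      have hpr : pr u = pr w := le_antisymm hnPw' hnPu'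
      -- u ≠ w and pairs disjoint
      have huw : u ≠ w := by
        rintro rfl
        exact hcr (Or.inl rfl)
      have humw : u ≠ m w := by
        rintro rfl
        exact hcrs (hnc w 1)
      rcases hprinj u w hpr with h | h | h | h
      · exact huw h
      · exact humw h
      · exact humw (by rw [← h, hm])
      · exact huw (hm.injective h)
end

section
/- Any 2-coloring of the edges of the cocktail party graph G^c on n vertices contains a monochromatic 2-reachable subset with at least n/2 vertices. -/
/-- Any 2-colored cocktail party graph on `n` vertices contains a monochromatic
2-reachable subset with at least `n / 2` vertices. -/
theorem stmt2 {V : Type*} [Fintype V] [DecidableEq V] (m : V → V)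
    (hm : Function.Involutive m) (hmf : ∀ v, m v ≠ v)
    (c : V → V → Fin 2) (hc : ∀ u v, c u v = c v u) :
    ∃ (i : Fin 2) (X : Finset V), reachSet m c i ↑X ∧
      Fintype.card V ≤ 2 * X.card := by
  classical
  rcases isEmpty_or_nonempty V with h | h
  · refine ⟨0, ∅, ?_, by simp⟩
    intro x hx; simp at hx
  · obtain ⟨v⟩ := h
    set S : Fin 2 → Finset V :=
      fun i => Finset.univ.filter (fun u => u = v ∨ adjC m c i v u) with hS
    have hmem : ∀ i u, u ∈ S i ↔ u = v ∨ adjC m c i v u := by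
      intro i u; simp [hS]
    have hsym : ∀ i u, adjC m c i v u → adjC m c i u v := by
      intro i u ⟨⟨h1, h2⟩, h3⟩
      refine ⟨⟨fun e => h1 e.symm, fun e => h2 ?_⟩, (hc u v).trans h3⟩
      rw [← e, hm u]
    have hreach : ∀ i, reachSet m c i (S i) := by
      intro i x hx y hy
      rw [Finset.mem_coe, hmem] at hx hy
      rcases hx with rfl | hx
      · rcases hy with rfl | hy
        · exact Or.inl rfl
        · exact Or.inr (Or.inl hy)
      · rcases hy with rfl | hy
        · exact Or.inr (Or.inl (hsym i x hx))
        · exact Or.inr (Or.inr ⟨v, hsym i x hx, hy⟩)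
    have hunion : Finset.univ.erase (m v) ⊆ S 0 ∪ S 1 := by
      intro u hu
      rw [Finset.mem_erase] at hu
      by_cases huv : u = v
      · simp [Finset.mem_union, hmem, huv]
      · have hadj : adjC m c (c v u) v u :=
          ⟨⟨fun e => huv e.symm, fun e => hu.1 e.symm⟩, rfl⟩
        rcases Fin.exists_fin_two.mp ⟨c v u, rfl⟩ with h0 | h0 <;>
          simp [Finset.mem_union, hmem] <;> [left; right] <;>
          right <;> rwa [← h0]
    have hcard : Fintype.card V ≤ (S 0).card + (S 1).card := by
      have h1 : (Finset.univ.erase (m v)).card ≤ (S 0 ∪ S 1).card :=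
        Finset.card_le_card hunion
      have h2 : ({v} : Finset V) ⊆ S 0 ∩ S 1 := by
        intro u hu; simp at hu; subst hu
        simp [Finset.mem_inter, hmem]
      have h3 : 1 ≤ (S 0 ∩ S 1).card := by
        have := Finset.card_le_card h2; simpa using this
      have h4 : (S 0 ∪ S 1).card + (S 0 ∩ S 1).card = (S 0).card + (S 1).card :=
        Finset.card_union_add_card_inter _ _
      have h5 : (Finset.univ.erase (m v)).card = Fintype.card V - 1 := by
        rw [Finset.card_erase_of_mem (Finset.mem_univ _), Finset.card_univ]
      have hpos : 1 ≤ Fintype.card V := Fintype.card_pos_iff.mpr ⟨v⟩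
      omega
    rcases le_total ((S 0).card) ((S 1).card) with hle | hle
    · exact ⟨1, S 1, hreach 1, by omega⟩
    · exact ⟨0, S 0, hreach 0, by omega⟩
end

section
/- There is a 2-coloring of the edges of the cocktail party graph G^c on n vertices (n even, n ≥ 4) such that no monochromatic 2-reachable subset has more than n/2 vertices. Specifically: partition V into two sets X and Y, each containing exactly one vertex from each deleted matching pair; color all edges inside X and inside Y red, and all edges between X and Y blue. Then every monochromatic 2-reachable subset has at most n/2 vertices. -/
/-- Sharpness example: partition `V` into `X` and `Y`, each containing exactly
one vertex of every matching pair; color edges inside `X` or inside `Y` red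
(color `0`) and edges between them blue (color `1`).  Then every monochromatic
2-reachable subset has at most `n / 2` vertices. -/
theorem stmt3 {V : Type*} [Fintype V] [DecidableEq V] (m : V → V)
    (hm : Function.Involutive m) (hmf : ∀ v, m v ≠ v)
    (hn : 4 ≤ Fintype.card V)
    (X Y : Set V) (hunion : X ∪ Y = Set.univ) (hdisj : X ∩ Y = ∅)
    (hmatch : ∀ v, v ∈ X ↔ m v ∈ Y)
    (c : V → V → Fin 2)
    (hcol : ∀ u v, cpAdj m u v →
      (c u v = 0 ↔ ((u ∈ X ∧ v ∈ X) ∨ (u ∈ Y ∧ v ∈ Y)))) :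
    ∀ (i : Fin 2) (S : Finset V), reachSet m c i ↑S →
      2 * S.card ≤ Fintype.card V := by
  intro i S hS
  have hside : ∀ u : V, u ∈ X ∨ u ∈ Y := by
    intro u
    have hu : u ∈ X ∪ Y := by rw [hunion]; exact Set.mem_univ u
    exact hu
  have hnot : ∀ u : V, ¬ (u ∈ X ∧ u ∈ Y) := by
    intro u hu
    have : u ∈ X ∩ Y := hu
    rw [hdisj] at this; exact this
  have hmatch' : ∀ v : V, m v ∈ X ↔ v ∈ Y := by
    intro v
    have := hmatch (m v)
    rwa [hm v] at this
  have key : ∀ v ∈ S, m v ∉ S := by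
    intro v hv hmv
    rcases hS v hv (m v) hmv with h | h | ⟨w, h1, h2⟩
    · exact hmf v h.symm
    · exact h.1.2 rfl
    · have pv := hside v
      have pw := hside w
      have pmv := hside (m v)
      have nv := hnot v
      have nw := hnot w
      have nmv := hnot (m v)
      have hmv1 := hmatch v
      have hmv2 := hmatch' v
      have e1 := hcol v w h1.1
      have e2 := hcol w (m v) h2.1
      obtain hi | hi : i = 0 ∨ i = 1 := by omega
      · subst hi
        have c1 := e1.mp h1.2
        have c2 := e2.mp h2.2
        rcases c1 with ⟨hvX, hwX⟩ | ⟨hvY, hwY⟩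
        · rcases c2 with ⟨_, hmX⟩ | ⟨hwY, _⟩
          · exact nmv ⟨hmX, hmv1.mp hvX⟩
          · exact nw ⟨hwX, hwY⟩
        · rcases c2 with ⟨hwX, _⟩ | ⟨_, hmY⟩
          · exact nw ⟨hwX, hwY⟩
          · exact nv ⟨hmv1.mpr hmY, hvY⟩
      · subst hi
        have c1 : ¬ ((v ∈ X ∧ w ∈ X) ∨ (v ∈ Y ∧ w ∈ Y)) := by
          intro h
          have := e1.mpr h
          rw [h1.2] at this
          exact absurd this (by decide)
        have c2 : ¬ ((w ∈ X ∧ m v ∈ X) ∨ (w ∈ Y ∧ m v ∈ Y)) := by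
          intro h
          have := e2.mpr h
          rw [h2.2] at this
          exact absurd this (by decide)
        rcases pv with hvX | hvY
        · have hwY : w ∈ Y := by
            rcases pw with h | h
            · exact absurd (Or.inl ⟨hvX, h⟩) c1
            · exact h
          exact c2 (Or.inr ⟨hwY, hmv1.mp hvX⟩)
        · have hwX : w ∈ X := by
            rcases pw with h | h
            · exact h
            · exact absurd (Or.inr ⟨hvY, h⟩) c1
          exact c2 (Or.inl ⟨hwX, hmv2.mpr hvY⟩)
  have hdisjS : Disjoint S (S.image m) := by
    rw [Finset.disjoint_left]
    intro a ha hb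
    obtain ⟨b, hb', rfl⟩ := Finset.mem_image.mp hb
    exact key b hb' ha
  have hcardim : (S.image m).card = S.card :=
    Finset.card_image_of_injective S hm.injective
  have := Finset.card_le_univ (S ∪ S.image m)
  rw [Finset.card_union_of_disjoint hdisjS, hcardim] at this
  omega
end

section
/- Let G^c be a 2-edge-colored cocktail party graph with e = (x,y) a color-2 edge critical for color 1 and f = (x,y') a color-1 edge critical for color 2 (y' the non-neighbor of y, x' the non-neighbor of x). If the edge (x',y) has color 2, then V = S_1(y') ∪ S_2(y): every vertex lies in the color-1 star at y' or the color-2 star at y. -/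
/-- In the situation of the lemma, if moreover the edge `(x', y)` has color 2,
then `V = S₁(y') ∪ S₂(y)`. -/
theorem stmt10 {V : Type*} [Fintype V] (m : V → V)
    (hm : Function.Involutive m) (hmf : ∀ v, m v ≠ v)
    (c : V → V → Fin 2) (hc : ∀ u v, c u v = c v u)
    (x y : V)
    (he : cpAdj m x y) (hce : c x y = 1) (hecrit : critPair m c 0 x y)
    (hf : cpAdj m x (m y)) (hcf : c x (m y) = 0) (hfcrit : critPair m c 1 x (m y))
    (hadj : cpAdj m (m x) y) (hcol : c (m x) y = 1) :
    mStar m c 0 (m y) ∪ mStar m c 1 y = Set.univ := by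
  apply Set.eq_univ_of_forall
  intro v
  by_cases hv1 : v = m y
  · exact Or.inl (Or.inl hv1)
  by_cases hv2 : v = y
  · exact Or.inr (Or.inl hv2)
  -- v is adjacent to both m y and y
  have hadj1 : cpAdj m (m y) v := ⟨fun h => hv1 h.symm, fun h => hv2 (h ▸ hm y)⟩
  have hadj2 : cpAdj m y v := ⟨fun h => hv2 h.symm, fun h => hv1 (h ▸ rfl)⟩
  rcases (show c (m y) v = 0 ∨ c (m y) v = 1 by omega) with h1 | h1
  · exact Or.inl (Or.inr ⟨hadj1, h1⟩)
  rcases (show c y v = 0 ∨ c y v = 1 by omega) with h2 | h2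
  · -- c y v = 0, c (m y) v = 1 : derive contradiction
    exfalso
    have hvx : v ≠ x := by
      intro h; rw [h, hc, hce] at h2; exact absurd h2 (by decide)
    have hvmx : v ≠ m x := by
      intro h; rw [h, hc, hcol] at h2; exact absurd h2 (by decide)
    have hxv : cpAdj m x v := ⟨fun h => hvx h.symm, fun h => hvmx h.symm⟩
    rcases (show c x v = 0 ∨ c x v = 1 by omega) with h3 | h3
    · exact hecrit (Or.inr (Or.inr ⟨v, ⟨hxv, h3⟩,
        ⟨⟨hv2, fun h => hv1 (by rw [← h, hm])⟩, (hc v y).trans h2⟩⟩))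
    · exact hfcrit (Or.inr (Or.inr ⟨v, ⟨hxv, h3⟩,
        ⟨⟨hv1, fun h => hv2 (hm.injective h)⟩, (hc v (m y)).trans h1⟩⟩))
  · exact Or.inr (Or.inr ⟨hadj2, h2⟩)
end

section
/- Let G^c be a 2-edge-colored cocktail party graph with e = (x,y) a color-2 edge critical for color 1 and f = (x,y') a color-1 edge critical for color 2, with (x',y) of color 1 and (x',y') of color 2. Define X = N_2(x), Y = N_2(y) \ (N_2(x) ∪ {x'}), and X_i = X ∩ N_i(x'), Y_i = Y ∩ N_i(x') for i ∈ {1,2}. If X_1 = ∅ then V = S_2(x') ∪ S_2(y); if Y_1 = ∅ then V = S_2(x') ∪ S_2(x); if X_2 = ∅ then V = S_1(x') ∪ S_1(x); if Y_2 = ∅ then V = S_1(x') ∪ S_1(y'). -/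
/-- Degenerate cases (iii)-(vi): with `(x', y)` of color 1 and `(x', y')` of
color 2, if one of the four parts `X₁, X₂, Y₁, Y₂` is empty, `V` is covered by
two monochromatic stars as indicated. -/
theorem stmt11 {V : Type*} [Fintype V] (m : V → V)
    (hm : Function.Involutive m) (hmf : ∀ v, m v ≠ v)
    (c : V → V → Fin 2) (hc : ∀ u v, c u v = c v u)
    (x y : V)
    (he : cpAdj m x y) (hce : c x y = 1) (hecrit : critPair m c 0 x y)
    (hf : cpAdj m x (m y)) (hcf : c x (m y) = 0) (hfcrit : critPair m c 1 x (m y))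
    (hadj1 : cpAdj m (m x) y) (hcol1 : c (m x) y = 0)
    (hadj2 : cpAdj m (m x) (m y)) (hcol2 : c (m x) (m y) = 1)
    (Xs Ys X1 X2 Y1 Y2 : Set V)
    (hXs : Xs = {v | adjC m c 1 x v})
    (hYs : Ys = {v | adjC m c 1 y v} \ ({v | adjC m c 1 x v} ∪ {m x}))
    (hX1 : X1 = Xs ∩ {v | adjC m c 0 (m x) v})
    (hX2 : X2 = Xs ∩ {v | adjC m c 1 (m x) v})
    (hY1 : Y1 = Ys ∩ {v | adjC m c 0 (m x) v})
    (hY2 : Y2 = Ys ∩ {v | adjC m c 1 (m x) v}) :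
    (X1 = ∅ → mStar m c 1 (m x) ∪ mStar m c 1 y = Set.univ) ∧
    (Y1 = ∅ → mStar m c 1 (m x) ∪ mStar m c 1 x = Set.univ) ∧
    (X2 = ∅ → mStar m c 0 (m x) ∪ mStar m c 0 x = Set.univ) ∧
    (Y2 = ∅ → mStar m c 0 (m x) ∪ mStar m c 0 (m y) = Set.univ) := by

  subst hXs hYs hX1 hX2 hY1 hY2
  have fin2 : ∀ a : Fin 2, a ≠ 0 → a = 1 := by decide
  have fin2' : ∀ a : Fin 2, a ≠ 1 → a = 0 := by decide
  have hmx : m (m x) = x := hm x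
  have hmy : m (m y) = y := hm y
  have crit0 : ∀ w, adjC m c 0 x w → adjC m c 0 w y → False := fun w h1 h2 =>
    hecrit (Or.inr (Or.inr ⟨w, h1, h2⟩))
  have crit1 : ∀ w, adjC m c 1 x w → adjC m c 1 w (m y) → False := fun w h1 h2 =>
    hfcrit (Or.inr (Or.inr ⟨w, h1, h2⟩))
  -- if v is generic and red to x, then v is blue to y
  have h0 : ∀ v, v ≠ x → v ≠ m x → v ≠ y → v ≠ m y → c x v = 0 → adjC m c 1 y v := by
    intro v hvx hvmx hvy hvmy hcv
    have hadjxv : adjC m c 0 x v := ⟨⟨Ne.symm hvx, Ne.symm hvmx⟩, hcv⟩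
    have hne : c v y ≠ 0 := by
      intro h
      exact crit0 v hadjxv ⟨⟨hvy, fun h' => hvmy (by rw [← h']; exact (hm v).symm)⟩, h⟩
    exact ⟨⟨Ne.symm hvy, Ne.symm hvmy⟩, by rw [hc y v]; exact fin2 _ hne⟩
  -- if v is generic and blue to x, then v is red to y'
  have h1 : ∀ v, v ≠ x → v ≠ m x → v ≠ y → v ≠ m y → c x v = 1 → adjC m c 0 (m y) v := by
    intro v hvx hvmx hvy hvmy hcv
    have hadjxv : adjC m c 1 x v := ⟨⟨Ne.symm hvx, Ne.symm hvmx⟩, hcv⟩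
    have hne : c v (m y) ≠ 1 := by
      intro h
      exact crit1 v hadjxv ⟨⟨hvmy, fun h' => hvy (by rw [← hm v, h', hmy])⟩, h⟩
    refine ⟨⟨Ne.symm hvmy, ?_⟩, by rw [hc (m y) v]; exact fin2' _ hne⟩
    rw [hmy]; exact Ne.symm hvy
  have memL : ∀ (i : Fin 2) (u w v : V), v = u → v ∈ mStar m c i u ∪ mStar m c i w :=
    fun i u w v h => Or.inl (Or.inl h)
  have memL' : ∀ (i : Fin 2) (u w v : V), adjC m c i u v → v ∈ mStar m c i u ∪ mStar m c i w :=
    fun i u w v h => Or.inl (Or.inr h)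
  have memR : ∀ (i : Fin 2) (u w v : V), v = w → v ∈ mStar m c i u ∪ mStar m c i w :=
    fun i u w v h => Or.inr (Or.inl h)
  have memR' : ∀ (i : Fin 2) (u w v : V), adjC m c i w v → v ∈ mStar m c i u ∪ mStar m c i w :=
    fun i u w v h => Or.inr (Or.inr h)
  -- membership of generic v in Ys, given c x v = 0
  have hYmem : ∀ v, v ≠ x → v ≠ m x → v ≠ y → v ≠ m y → c x v = 0 →
      v ∈ ({v | adjC m c 1 y v} \ ({v | adjC m c 1 x v} ∪ {m x}) : Set V) := by
    intro v hvx hvmx hvy hvmy hcv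
    refine ⟨h0 v hvx hvmx hvy hvmy hcv, ?_⟩
    rintro (h | h)
    · rw [h.2] at hcv; exact absurd hcv (by decide)
    · exact hvmx h
  refine ⟨?_, ?_, ?_, ?_⟩ <;> intro hE <;> apply Set.eq_univ_iff_forall.mpr <;> intro v
  · -- X1 = ∅ : star1 (m x) ∪ star1 y
    by_cases hvmx : v = m x
    · exact memL _ _ _ _ hvmx
    by_cases hvy : v = y
    · exact memR _ _ _ _ hvy
    by_cases hvmy : v = m y
    · exact memL' _ _ _ _ (hvmy ▸ ⟨hadj2, hcol2⟩)
    by_cases hvx : v = x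
    · exact memR' _ _ _ _ (hvx ▸ ⟨⟨Ne.symm he.1, hf.1.symm⟩, by rw [hc]; exact hce⟩)
    rcases eq_or_ne (c x v) 0 with hcv | hcv
    · exact memR' _ _ _ _ (h0 v hvx hvmx hvy hvmy hcv)
    · have hXv : adjC m c 1 x v := ⟨⟨Ne.symm hvx, Ne.symm hvmx⟩, fin2 _ hcv⟩
      have hne : c (m x) v ≠ 0 := by
        intro h
        exact Set.eq_empty_iff_forall_notMem.mp hE v ⟨hXv, ⟨Ne.symm hvmx, (by rw [hmx]; exact Ne.symm hvx : m (m x) ≠ v)⟩, h⟩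
      exact memL' _ _ _ _ ⟨⟨Ne.symm hvmx, (by rw [hmx]; exact Ne.symm hvx : m (m x) ≠ v)⟩, fin2 _ hne⟩
  · -- Y1 = ∅ : star1 (m x) ∪ star1 x
    by_cases hvmx : v = m x
    · exact memL _ _ _ _ hvmx
    by_cases hvx : v = x
    · exact memR _ _ _ _ hvx
    by_cases hvy : v = y
    · exact memR' _ _ _ _ (hvy ▸ ⟨he, hce⟩)
    by_cases hvmy : v = m y
    · exact memL' _ _ _ _ (hvmy ▸ ⟨hadj2, hcol2⟩)
    rcases eq_or_ne (c x v) 0 with hcv | hcv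
    · have hYv := hYmem v hvx hvmx hvy hvmy hcv
      have hne : c (m x) v ≠ 0 := by
        intro h
        exact Set.eq_empty_iff_forall_notMem.mp hE v ⟨hYv, ⟨Ne.symm hvmx, (by rw [hmx]; exact Ne.symm hvx : m (m x) ≠ v)⟩, h⟩
      exact memL' _ _ _ _ ⟨⟨Ne.symm hvmx, (by rw [hmx]; exact Ne.symm hvx : m (m x) ≠ v)⟩, fin2 _ hne⟩
    · exact memR' _ _ _ _ ⟨⟨Ne.symm hvx, Ne.symm hvmx⟩, fin2 _ hcv⟩
  · -- X2 = ∅ : star0 (m x) ∪ star0 x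
    by_cases hvmx : v = m x
    · exact memL _ _ _ _ hvmx
    by_cases hvx : v = x
    · exact memR _ _ _ _ hvx
    by_cases hvy : v = y
    · exact memL' _ _ _ _ (hvy ▸ ⟨hadj1, hcol1⟩)
    by_cases hvmy : v = m y
    · exact memR' _ _ _ _ (hvmy ▸ ⟨hf, hcf⟩)
    rcases eq_or_ne (c x v) 0 with hcv | hcv
    · exact memR' _ _ _ _ ⟨⟨Ne.symm hvx, Ne.symm hvmx⟩, hcv⟩
    · have hXv : adjC m c 1 x v := ⟨⟨Ne.symm hvx, Ne.symm hvmx⟩, fin2 _ hcv⟩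
      have hne : c (m x) v ≠ 1 := by
        intro h
        exact Set.eq_empty_iff_forall_notMem.mp hE v ⟨hXv, ⟨Ne.symm hvmx, (by rw [hmx]; exact Ne.symm hvx : m (m x) ≠ v)⟩, h⟩
      exact memL' _ _ _ _ ⟨⟨Ne.symm hvmx, (by rw [hmx]; exact Ne.symm hvx : m (m x) ≠ v)⟩, fin2' _ hne⟩
  · -- Y2 = ∅ : star0 (m x) ∪ star0 (m y)
    by_cases hvmx : v = m x
    · exact memL _ _ _ _ hvmx
    by_cases hvmy : v = m y
    · exact memR _ _ _ _ hvmy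
    by_cases hvy : v = y
    · exact memL' _ _ _ _ (hvy ▸ ⟨hadj1, hcol1⟩)
    by_cases hvx : v = x
    · exact memR' _ _ _ _ (hvx ▸ ⟨⟨Ne.symm hf.1, (by rw [hmy]; exact Ne.symm he.1 : m (m y) ≠ x)⟩, by rw [hc]; exact hcf⟩)
    rcases eq_or_ne (c x v) 0 with hcv | hcv
    · have hYv := hYmem v hvx hvmx hvy hvmy hcv
      have hne : c (m x) v ≠ 1 := by
        intro h
        exact Set.eq_empty_iff_forall_notMem.mp hE v ⟨hYv, ⟨Ne.symm hvmx, (by rw [hmx]; exact Ne.symm hvx : m (m x) ≠ v)⟩, h⟩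
      exact memL' _ _ _ _ ⟨⟨Ne.symm hvmx, (by rw [hmx]; exact Ne.symm hvx : m (m x) ≠ v)⟩, fin2' _ hne⟩
    · exact memR' _ _ _ _ (h1 v hvx hvmx hvy hvmy (fin2 _ hcv))
end

section
/- In every 2-coloring of the edges of the complete graph K_n, there is a monochromatic 2-reachable subset with at least ⌈3n/4⌉ vertices. -/
set_option linter.unusedSectionVars false


/-! Setting: a 2-edge-colored complete graph on a vertex type `V`, with a
symmetric coloring `c : V → V → Fin 2` of the pairs of distinct vertices. -/

/-- Color-`i` adjacency in a 2-edge-colored complete graph. -/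
def adjK {V : Type*} (c : V → V → Fin 2) (i : Fin 2) (u v : V) : Prop :=
  u ≠ v ∧ c u v = i

/-- Distance at most 2 in the color-`i` subgraph of the complete graph. -/
def reach2K {V : Type*} (c : V → V → Fin 2) (i : Fin 2) (u v : V) : Prop :=
  u = v ∨ adjK c i u v ∨ ∃ w, adjK c i u w ∧ adjK c i w v

/-- A dominating `i`-pair: an `i`-edge `{u,v}` such that every other vertex is
`i`-adjacent to `u` or to `v`. -/
def domP {V : Type*} (c : V → V → Fin 2) (i : Fin 2) (u v : V) : Prop :=
  u ≠ v ∧ c u v = i ∧ ∀ w, w ≠ u → w ≠ v → (c u w = i ∨ c v w = i)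

instance domP.dec {V : Type*} [Fintype V] [DecidableEq V] (c : V → V → Fin 2)
    (i : Fin 2) (u v : V) : Decidable (domP c i u v) :=
  inferInstanceAs (Decidable (_ ∧ _ ∧ _))

/-- Vertices lying in some dominating `i`-pair. -/
def suppD {V : Type*} [Fintype V] [DecidableEq V] (c : V → V → Fin 2) (i : Fin 2) :
    Finset V :=
  Finset.univ.filter (fun x => ∃ y, domP c i x y)

lemma fin2_resolve : ∀ {i j a : Fin 2}, j ≠ i → a ≠ j → a = i := by decide

section main
variable {V : Type*} [Fintype V] [DecidableEq V] (c : V → V → Fin 2)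
  (hc : ∀ u v, c u v = c v u)
include hc

lemma domP_symm {i : Fin 2} {u v : V} (h : domP c i u v) : domP c i v u :=
  ⟨h.1.symm, by rw [hc v u]; exact h.2.1, fun w h1 h2 => (h.2.2 w h2 h1).symm⟩

lemma reach_of {i j : Fin 2} (hij : j ≠ i) {x y : V}
    (h : x = y ∨ ¬ domP c i x y) : reach2K c j x y := by
  by_cases hxy : x = y
  · exact Or.inl hxy
  rcases h with h | h
  · exact Or.inl h
  by_contra hre
  apply h
  have hadj : c x y ≠ j := fun hcj => hre (Or.inr (Or.inl ⟨hxy, hcj⟩))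
  refine ⟨hxy, fin2_resolve hij hadj, fun w hwx hwy => ?_⟩
  by_contra hcon
  push_neg at hcon
  have hxw : c x w = j := fin2_resolve (Ne.symm hij) hcon.1
  have hyw : c y w = j := fin2_resolve (Ne.symm hij) hcon.2
  exact hre (Or.inr (Or.inr ⟨w, ⟨Ne.symm hwx, hxw⟩,
    ⟨hwy, by rw [hc w y]; exact hyw⟩⟩))

lemma lemA {i j : Fin 2} (hij : j ≠ i) {x y u v : V}
    (hxy : domP c i x y) (huv : domP c j u v) : x ≠ u := by
  rintro rfl
  obtain ⟨hxyne, hcxy, hdomi⟩ := hxy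
  obtain ⟨huvne, hcuv, hdomj⟩ := huv
  have hyv : y ≠ v := by
    rintro rfl
    rw [hcxy] at hcuv
    exact hij hcuv.symm
  have h1 : c v y = j := by
    rcases hdomj y (Ne.symm hxyne) hyv with h | h
    · rw [hcxy] at h; exact absurd h.symm hij
    · exact h
  rcases hdomi v (Ne.symm huvne) (Ne.symm hyv) with h | h
  · rw [hcuv] at h; exact hij h
  · rw [hc y v, h1] at h; exact hij h

lemma lemB {i j : Fin 2} (hij : j ≠ i) {x y u v : V}
    (hxy : domP c i x y) (huv : domP c j u v) :
    (c x u = i ∧ c x v = j ∧ c y u = j ∧ c y v = i) ∨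
    (c x u = j ∧ c x v = i ∧ c y u = i ∧ c y v = j) := by
  have hxu := lemA c hc hij hxy huv
  have hxv := lemA c hc hij hxy (domP_symm c hc huv)
  have hyu := lemA c hc hij (domP_symm c hc hxy) huv
  have hyv := lemA c hc hij (domP_symm c hc hxy) (domP_symm c hc huv)
  obtain ⟨hne, hcxy, hdi⟩ := hxy
  obtain ⟨hne', hcuv, hdj⟩ := huv
  by_cases h1 : c x u = i
  · have h2 : c x v = j := by
      rcases hdj x hxu hxv with h | h
      · rw [hc u x, h1] at h; exact absurd h.symm hij
      · rw [hc x v]; exact h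
    have h3 : c y v = i := by
      rcases hdi v (Ne.symm hxv) (Ne.symm hyv) with h | h
      · rw [h2] at h; exact absurd h hij
      · exact h
    have h4 : c y u = j := by
      rcases hdj y hyu hyv with h | h
      · rw [hc y u]; exact h
      · rw [hc v y, h3] at h; exact absurd h.symm hij
    exact Or.inl ⟨h1, h2, h4, h3⟩
  · have h1' : c x u = j := fin2_resolve (Ne.symm hij) h1
    have h4 : c y u = i := by
      rcases hdi u (Ne.symm hxu) (Ne.symm hyu) with h | h
      · exact absurd h h1
      · exact h
    have h5 : c y v = j := by
      rcases hdj y hyu hyv with h | h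
      · rw [hc u y, h4] at h; exact absurd h.symm hij
      · rw [hc y v]; exact h
    have h2 : c x v = i := by
      rcases hdi v (Ne.symm hxv) (Ne.symm hyv) with h | h
      · exact h
      · rw [h5] at h; exact absurd h hij
    exact Or.inr ⟨h1', h2, h4, h5⟩

lemma key2 {i j : Fin 2} (hij : j ≠ i) {u v : V} (huv : domP c j u v)
    (h4 : 4 * ((suppD c i).filter (fun x => c x u = i)).card ≤ Fintype.card V) :
    ∃ X : Finset V, (∀ x ∈ X, ∀ y ∈ X, reach2K c j x y) ∧
      3 * Fintype.card V ≤ 4 * X.card := by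
  refine ⟨((suppD c i).filter (fun x => c x u = i))ᶜ, ?_, ?_⟩
  · intro x hx y hy
    apply reach_of c hc hij
    by_cases hxy : x = y
    · exact Or.inl hxy
    refine Or.inr fun hdom => ?_
    rcases lemB c hc hij hdom huv with ⟨ha, -, -, -⟩ | ⟨-, -, hb, -⟩
    · exact (Finset.mem_compl.mp hx) (Finset.mem_filter.mpr
        ⟨Finset.mem_filter.mpr ⟨Finset.mem_univ x, ⟨y, hdom⟩⟩, ha⟩)
    · exact (Finset.mem_compl.mp hy) (Finset.mem_filter.mpr
        ⟨Finset.mem_filter.mpr ⟨Finset.mem_univ y, ⟨x, domP_symm c hc hdom⟩⟩, hb⟩)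
  · have h1 := Finset.card_compl ((suppD c i).filter (fun x => c x u = i))
    have h2 : ((suppD c i).filter (fun x => c x u = i)).card ≤ Fintype.card V := by
      have := Finset.card_le_univ ((suppD c i).filter (fun x => c x u = i))
      simpa using this
    omega

lemma key {i j : Fin 2} (hij : j ≠ i)
    (hS : 2 * (suppD c i).card ≤ Fintype.card V)
    {u v : V} (huv : domP c j u v) :
    ∃ X : Finset V, (∀ x ∈ X, ∀ y ∈ X, reach2K c j x y) ∧
      3 * Fintype.card V ≤ 4 * X.card := by
  have hdisj : Disjoint ((suppD c i).filter (fun x => c x u = i))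
      ((suppD c i).filter (fun x => c x v = i)) := by
    rw [Finset.disjoint_left]
    intro a haU haV
    have hau := (Finset.mem_filter.mp haU).2
    have hav := (Finset.mem_filter.mp haV).2
    obtain ⟨y, hay⟩ := (Finset.mem_filter.mp ((Finset.mem_filter.mp haU).1)).2
    rcases lemB c hc hij hay huv with ⟨-, h2, -, -⟩ | ⟨h1', -, -, -⟩
    · rw [hav] at h2; exact hij h2.symm
    · rw [hau] at h1'; exact hij h1'.symm
  have hcard : ((suppD c i).filter (fun x => c x u = i)).card +
      ((suppD c i).filter (fun x => c x v = i)).card ≤ (suppD c i).card := by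
    rw [← Finset.card_union_of_disjoint hdisj]
    exact Finset.card_le_card
      (Finset.union_subset (Finset.filter_subset _ _) (Finset.filter_subset _ _))
  rcases le_total ((suppD c i).filter (fun x => c x u = i)).card
      ((suppD c i).filter (fun x => c x v = i)).card with h | h
  · exact key2 c hc hij huv (by omega)
  · exact key2 c hc hij (domP_symm c hc huv) (by omega)

end main

/-- In every 2-coloring of `E(K_n)` there is a monochromatic 2-reachable subset
with at least `⌈3n/4⌉` vertices. -/
theorem stmt16 {V : Type*} [Fintype V] [DecidableEq V] (c : V → V → Fin 2)
    (hc : ∀ u v, c u v = c v u) :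
    ∃ (i : Fin 2) (X : Finset V),
      (∀ x ∈ X, ∀ y ∈ X, reach2K c i x y) ∧
      3 * Fintype.card V ≤ 4 * X.card := by
  by_cases h0 : ∃ u v : V, domP c 0 u v
  · by_cases h1 : ∃ u v : V, domP c 1 u v
    · obtain ⟨u0, v0, hd0⟩ := h0
      obtain ⟨u1, v1, hd1⟩ := h1
      have hdisj : Disjoint (suppD c 0) (suppD c 1) := by
        rw [Finset.disjoint_left]
        intro a ha0 ha1
        obtain ⟨y, hy⟩ := (Finset.mem_filter.mp ha0).2
        obtain ⟨z, hz⟩ := (Finset.mem_filter.mp ha1).2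
        exact lemA c hc (show (0 : Fin 2) ≠ 1 by decide) hz hy rfl
      have hsum : (suppD c 0).card + (suppD c 1).card ≤ Fintype.card V := by
        rw [← Finset.card_union_of_disjoint hdisj]
        have := Finset.card_le_univ (suppD c 0 ∪ suppD c 1)
        simpa using this
      rcases le_total (suppD c 0).card (suppD c 1).card with h | h
      · obtain ⟨X, hX⟩ := key c hc (show (1 : Fin 2) ≠ 0 by decide) (by omega) hd1
        exact ⟨1, X, hX⟩
      · obtain ⟨X, hX⟩ := key c hc (show (0 : Fin 2) ≠ 1 by decide) (by omega) hd0
        exact ⟨0, X, hX⟩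
    · refine ⟨0, Finset.univ, fun x _ y _ => ?_, by rw [Finset.card_univ]; omega⟩
      exact reach_of c hc (show (0 : Fin 2) ≠ 1 by decide)
        (Or.inr fun hd => h1 ⟨x, y, hd⟩)
  · refine ⟨1, Finset.univ, fun x _ y _ => ?_, by rw [Finset.card_univ]; omega⟩
    exact reach_of c hc (show (1 : Fin 2) ≠ 0 by decide)
      (Or.inr fun hd => h0 ⟨x, y, hd⟩)
end

section
/- Let G^c be a 2-edge-colored cocktail party graph in which V cannot be covered by two monochromatic stars of the same color. Then every critical pair for color 1 is an edge of color 2 and every critical pair for color 2 is an edge of color 1. -/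
/-- If `V` cannot be covered by two monochromatic stars of the same color, then
every critical pair for color 1 is an edge of color 2 and every critical pair
for color 2 is an edge of color 1. -/
theorem stmt17 {V : Type*} [Fintype V] (m : V → V)
    (hm : Function.Involutive m) (hmf : ∀ v, m v ≠ v)
    (c : V → V → Fin 2) (hc : ∀ u v, c u v = c v u)
    (hns : ¬ ∃ (i : Fin 2) (u v : V), mStar m c i u ∪ mStar m c i v = Set.univ) :
    (∀ u v : V, critPair m c 0 u v → cpAdj m u v ∧ c u v = 1) ∧
    (∀ u v : V, critPair m c 1 u v → cpAdj m u v ∧ c u v = 0) := by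
  have fin2 : ∀ a b x : Fin 2, a ≠ b → x ≠ b → x = a := by decide
  have key : ∀ (i j : Fin 2), j ≠ i → ∀ u v : V, critPair m c i u v →
      cpAdj m u v ∧ c u v = j := by
    intro i j hij u v h
    have hne : u ≠ v := fun e => h (Or.inl e)
    have hadj : cpAdj m u v := by
      by_contra hnadj
      have hmuv : m u = v := by
        rcases not_and_or.mp hnadj with h1 | h1
        · exact absurd hne (by simpa using h1)
        · simpa using h1
      apply hns
      refine ⟨j, u, v, Set.eq_univ_iff_forall.mpr fun w => ?_⟩
      by_cases hwu : w = u
      · exact Or.inl (Or.inl hwu)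
      by_cases hwv : w = v
      · exact Or.inr (Or.inl hwv)
      have hau : cpAdj m u w := ⟨fun e => hwu e.symm, fun e => hwv (hmuv.symm.trans e).symm⟩
      have hav : cpAdj m v w := ⟨fun e => hwv e.symm, by rw [← hmuv, hm u]; exact fun e => hwu e.symm⟩
      by_cases h1 : c u w = i
      · by_cases h2 : c v w = i
        · exfalso
          apply h
          have hmw : m w ≠ v := fun e => hwu (by
            have := congrArg m e
            rw [hm w, ← hmuv, hm u] at this
            exact this)
          exact Or.inr (Or.inr ⟨w, ⟨hau, h1⟩, ⟨⟨hwv, hmw⟩, by rw [hc]; exact h2⟩⟩)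
        · exact Or.inr (Or.inr ⟨hav, fin2 j i _ hij h2⟩)
      · exact Or.inl (Or.inr ⟨hau, fin2 j i _ hij h1⟩)
    refine ⟨hadj, ?_⟩
    by_cases hcv : c u v = i
    · exact absurd (Or.inr (Or.inl ⟨hadj, hcv⟩)) h
    · exact fin2 j i _ hij hcv
  exact ⟨key 0 1 (by decide), key 1 0 (by decide)⟩
end
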